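/- arXiv:1710.08954 — 4 statements merged into one kernel-verified Lean document; each statement's English description precedes it below -/
import Mathlib

section
/- Let D be an r×r real positive definite matrix and let X be an (r+s)×(r+s) real positive semidefinite matrix with fromBlocks(D,0,0,0) • X = 0. Then every entry of X having at least one index among the first r indices is zero, i.e., X = fromBlocks(0,0,0,X₂₂) where X₂₂ is the lower-right s×s block of X, and X₂₂ is positive semidefinite. (This justifies the row/column deletion of the Basic Step of Sieve-SDP.) -/
/-!
With `S = √D`, which is invertible because `D ≻ 0`, we have `tr (D X₁₁) = tr (S X₁₁ S)`, the trace
of a positive semidefinite matrix; so `S X₁₁ S = 0`, hence `X₁₁ = 0`. A positive semidefinite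
matrix with a zero diagonal entry `Xᵢᵢ = eᵢᴴ X eᵢ` satisfies `X eᵢ = 0`, so its whole `i`-th row
and column vanish.
-/

open Matrix

namespace Matrix

variable {𝕜 m n α : Type*}

theorem trace_fromBlocks_zero_mul [Fintype m] [Fintype n] [NonUnitalNonAssocSemiring α]
    (D : Matrix m m α) (X : Matrix (m ⊕ n) (m ⊕ n) α) :
    (fromBlocks D 0 0 0 * X).trace = (D * X.toBlocks₁₁).trace := by
  simp [trace, Fintype.sum_sum_type, mul_apply, toBlocks₁₁]

variable [RCLike 𝕜] [Fintype n]

open scoped ComplexOrder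

open scoped MatrixOrder in
theorem PosSemidef.eq_zero_of_trace_mul_eq_zero {A D : Matrix n n 𝕜} (hA : A.PosSemidef)
    (hD : D.PosDef) (h : (D * A).trace = 0) : A = 0 := by
  classical
  set S := CFC.sqrt D
  have hS : IsUnit S := (CFC.isUnit_sqrt_iff D hD.posSemidef.nonneg).mpr hD.isUnit
  have hS_herm : Sᴴ = S := (CFC.sqrt_nonneg D).posSemidef.isHermitian
  have hSA : (S * A * S).PosSemidef := by
    simpa only [hS_herm] using hA.conjTranspose_mul_mul_same S
  rw [← hS.mul_right_eq_zero, ← hS.mul_left_eq_zero, ← hSA.trace_eq_zero_iff, trace_mul_cycle,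
    CFC.sqrt_mul_sqrt_self D hD.posSemidef.nonneg, h]

theorem PosSemidef.apply_eq_zero_of_diag_eq_zero {A : Matrix n n 𝕜} (hA : A.PosSemidef) {i : n}
    (hi : A i i = 0) (j : n) : A i j = 0 ∧ A j i = 0 := by
  classical
  have hcol : A *ᵥ Pi.single i 1 = 0 :=
    (hA.dotProduct_mulVec_zero_iff _).mp (by simp [hi])
  have hji : A j i = 0 := by simpa [mulVec_single_one] using congr_fun hcol j
  exact ⟨by rw [← hA.isHermitian.apply, hji, star_zero], hji⟩

end Matrix

/-- Row/column deletion step of Sieve-SDP: if `D ≻ 0` is `r × r`, `X ⪰ 0` is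
`(r+s) × (r+s)` and `fromBlocks D 0 0 0 • X = 0`, then every entry of `X` with an
index among the first `r` indices is zero, i.e. `X = fromBlocks 0 0 0 X₂₂`, and
the lower-right block `X₂₂` is positive semidefinite. -/
theorem sieve_row_column_deletion (r s : ℕ)
    (D : Matrix (Fin r) (Fin r) ℝ) (hD : D.PosDef)
    (X : Matrix (Fin r ⊕ Fin s) (Fin r ⊕ Fin s) ℝ) (hX : X.PosSemidef)
    (h : ((fromBlocks D 0 0 0 : Matrix (Fin r ⊕ Fin s) (Fin r ⊕ Fin s) ℝ) * X).trace = 0) :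
    (∀ (i : Fin r) (j : Fin r ⊕ Fin s), X (Sum.inl i) j = 0 ∧ X j (Sum.inl i) = 0) ∧
    X = fromBlocks 0 0 0 X.toBlocks₂₂ ∧
    X.toBlocks₂₂.PosSemidef := by
  have h₁₁ : X.toBlocks₁₁ = 0 :=
    (hX.submatrix Sum.inl).eq_zero_of_trace_mul_eq_zero hD
      (by rwa [trace_fromBlocks_zero_mul] at h)
  have hrc (i : Fin r) (j : Fin r ⊕ Fin s) : X (Sum.inl i) j = 0 ∧ X j (Sum.inl i) = 0 :=
    hX.apply_eq_zero_of_diag_eq_zero (congr_fun₂ h₁₁ i i) j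
  refine ⟨hrc, ?_, hX.submatrix Sum.inr⟩
  conv_lhs => rw [← fromBlocks_toBlocks X]
  congr 1 <;> ext i j
  · exact (hrc i (Sum.inr j)).1
  · exact (hrc j (Sum.inr i)).2
end

section
/- Basic-Step setup: n = r+s, A₁,…,A_m are symmetric n×n real matrices with A₁ = fromBlocks(D,0,0,0) for an r×r positive definite matrix D, and b ∈ ℝᵐ with b₁ = 0. Then an n×n matrix X is feasible for (P) (i.e., X ⪰ 0 and Aᵢ • X = bᵢ for all i = 1,…,m) if and only if there exists an s×s matrix Y feasible for (P_pre) (i.e., Y ⪰ 0 and (Aᵢ)₂₂ • Y = bᵢ for all i = 2,…,m) with X = fromBlocks(0,0,0,Y). -/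
/-!
If `X ⪰ 0` and `tr (fromBlocks D 0 0 0 * X) = tr (D * X₁₁) = 0` with `D ≻ 0`, then writing
`D = yᴴ y` with `y` invertible, the PSD matrix `y X₁₁ yᴴ` has trace zero, so it vanishes and
`X₁₁ = 0`. A PSD matrix with a zero diagonal entry has the whole corresponding row and column
zero, hence `X = fromBlocks 0 0 0 X₂₂`, and every constraint `Aᵢ • X = bᵢ` reads
`(Aᵢ)₂₂ • X₂₂ = bᵢ`.
-/

open Matrix
open scoped ComplexOrder

namespace Matrix

section Trace

variable {α : Type*} {p q : Type*} [Fintype p] [Fintype q]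

theorem trace_fromBlocks [AddCommMonoid α] (A : Matrix p p α) (B : Matrix p q α)
    (C : Matrix q p α) (D : Matrix q q α) :
    (fromBlocks A B C D).trace = A.trace + D.trace := by
  simp [trace, Fintype.sum_sum_type]

theorem trace_fromBlocks₁₁_mul [NonUnitalNonAssocSemiring α] (D : Matrix p p α)
    (X : Matrix (p ⊕ q) (p ⊕ q) α) :
    (fromBlocks D 0 0 0 * X).trace = (D * X.toBlocks₁₁).trace := by
  conv_lhs => rw [← fromBlocks_toBlocks X]
  simp [fromBlocks_multiply, trace_fromBlocks]

theorem trace_mul_fromBlocks₂₂ [NonUnitalNonAssocSemiring α] (M : Matrix (p ⊕ q) (p ⊕ q) α)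
    (Y : Matrix q q α) :
    (M * fromBlocks 0 0 0 Y).trace = (M.toBlocks₂₂ * Y).trace := by
  conv_lhs => rw [← fromBlocks_toBlocks M]
  simp [fromBlocks_multiply, trace_fromBlocks]

end Trace

namespace PosSemidef

variable {𝕜 : Type*} [RCLike 𝕜] {n p q : Type*}

open scoped MatrixOrder in
theorem eq_zero_of_trace_posDef_mul_eq_zero [Fintype n] [DecidableEq n] {D Q : Matrix n n 𝕜}
    (hQ : Q.PosSemidef) (hD : D.PosDef) (h : (D * Q).trace = 0) : Q = 0 := by
  obtain ⟨y, hy, rfl⟩ :=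
    CStarAlgebra.isStrictlyPositive_iff_eq_star_mul_self.mp hD.isStrictlyPositive
  have hyQy : y * Q * star y = 0 := by
    refine (hQ.mul_mul_conjTranspose_same y).trace_eq_zero_iff.mp ?_
    rwa [trace_mul_cycle, ← star_eq_conjTranspose]
  rwa [hy.star.mul_left_eq_zero, hy.mul_right_eq_zero] at hyQy

theorem apply_eq_zero_of_diag_eq_zero_s4 [Fintype n] [DecidableEq n] {X : Matrix n n 𝕜}
    (hX : X.PosSemidef) {i : n} (h : X i i = 0) (j : n) : X j i = 0 := by
  have hXi : X *ᵥ Pi.single i 1 = 0 :=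
    (hX.dotProduct_mulVec_zero_iff _).mp (by simp [mulVec_single, h])
  simpa [mulVec_single] using congrFun hXi j

theorem toBlocks₁₁ {X : Matrix (p ⊕ q) (p ⊕ q) 𝕜} (hX : X.PosSemidef) :
    X.toBlocks₁₁.PosSemidef :=
  hX.submatrix Sum.inl

theorem toBlocks₂₂ {X : Matrix (p ⊕ q) (p ⊕ q) 𝕜} (hX : X.PosSemidef) :
    X.toBlocks₂₂.PosSemidef :=
  hX.submatrix Sum.inr

theorem eq_fromBlocks_of_toBlocks₁₁_eq_zero [Fintype p] [Fintype q]
    {X : Matrix (p ⊕ q) (p ⊕ q) 𝕜} (hX : X.PosSemidef) (h : X.toBlocks₁₁ = 0) :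
    X = fromBlocks 0 0 0 X.toBlocks₂₂ := by
  classical
  have hcol (a : p) (k : p ⊕ q) : X k (.inl a) = 0 :=
    hX.apply_eq_zero_of_diag_eq_zero_s4 (congrFun₂ h a a) k
  have hrow (a : p) (k : p ⊕ q) : X (.inl a) k = 0 := by
    rw [← hX.isHermitian.apply, hcol, star_zero]
  ext (a | a) (b | b) <;> simp [hcol, hrow, Matrix.toBlocks₂₂]

theorem fromBlocks_zero_zero_zero [Fintype p] [Fintype q] [DecidableEq q] {Y : Matrix q q 𝕜}
    (hY : Y.PosSemidef) :
    (fromBlocks (0 : Matrix p p 𝕜) 0 0 Y).PosSemidef := by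
  have h := hY.mul_mul_conjTranspose_same (fromRows (0 : Matrix p q 𝕜) (1 : Matrix q q 𝕜))
  rw [fromRows_mul, conjTranspose_fromRows_eq_fromCols_conjTranspose, fromRows_mul_fromCols] at h
  simpa only [Matrix.zero_mul, Matrix.mul_zero, conjTranspose_zero, conjTranspose_one,
    Matrix.one_mul, Matrix.mul_one] using h

end PosSemidef

end Matrix

theorem sieve_basic_step_feasibility_general (r s m : ℕ)
    (A : Fin (m + 1) → Matrix (Fin r ⊕ Fin s) (Fin r ⊕ Fin s) ℝ)
    (D : Matrix (Fin r) (Fin r) ℝ) (hD : D.PosDef)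
    (hA0 : A 0 = fromBlocks D 0 0 0)
    (b : Fin (m + 1) → ℝ) (hb0 : b 0 = 0) :
    ∀ X : Matrix (Fin r ⊕ Fin s) (Fin r ⊕ Fin s) ℝ,
      (X.PosSemidef ∧ ∀ i, (A i * X).trace = b i) ↔
      ∃ Y : Matrix (Fin s) (Fin s) ℝ, Y.PosSemidef ∧
        (∀ i : Fin m, ((A i.succ).toBlocks₂₂ * Y).trace = b i.succ) ∧
        X = fromBlocks 0 0 0 Y := by
  intro X
  constructor
  · rintro ⟨hX, hfeas⟩
    have hX₁₁ : X.toBlocks₁₁ = 0 := by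
      refine hX.toBlocks₁₁.eq_zero_of_trace_posDef_mul_eq_zero hD ?_
      rw [← trace_fromBlocks₁₁_mul, ← hA0, hfeas 0, hb0]
    have hXY := hX.eq_fromBlocks_of_toBlocks₁₁_eq_zero hX₁₁
    refine ⟨X.toBlocks₂₂, hX.toBlocks₂₂, fun i => ?_, hXY⟩
    rw [← trace_mul_fromBlocks₂₂, ← hXY]
    exact hfeas i.succ
  · rintro ⟨Y, hY, hfeas, rfl⟩
    refine ⟨hY.fromBlocks_zero_zero_zero, Fin.cases ?_ fun i => ?_⟩
    · rw [trace_mul_fromBlocks₂₂, hA0, toBlocks_fromBlocks₂₂, Matrix.zero_mul, trace_zero, hb0]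
    · exact (trace_mul_fromBlocks₂₂ _ _).trans (hfeas i)

/-- Basic-Step feasibility correspondence: with `A 0 = fromBlocks D 0 0 0`, `D ≻ 0`,
`b 0 = 0`, a matrix `X` is feasible for (P) iff `X = fromBlocks 0 0 0 Y` for some `Y`
feasible for the reduced problem (P_pre). -/
theorem sieve_basic_step_feasibility (r s m : ℕ)
    (A : Fin (m + 1) → Matrix (Fin r ⊕ Fin s) (Fin r ⊕ Fin s) ℝ)
    (hA : ∀ i, (A i).IsSymm)
    (D : Matrix (Fin r) (Fin r) ℝ) (hD : D.PosDef)
    (hA0 : A 0 = fromBlocks D 0 0 0)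
    (b : Fin (m + 1) → ℝ) (hb0 : b 0 = 0) :
    ∀ X : Matrix (Fin r ⊕ Fin s) (Fin r ⊕ Fin s) ℝ,
      (X.PosSemidef ∧ ∀ i, (A i * X).trace = b i) ↔
      ∃ Y : Matrix (Fin s) (Fin s) ℝ, Y.PosSemidef ∧
        (∀ i : Fin m, ((A i.succ).toBlocks₂₂ * Y).trace = b i.succ) ∧
        X = fromBlocks 0 0 0 Y :=
  sieve_basic_step_feasibility_general r s m A D hD hA0 b hb0
end

section
/- Dual recovery correctness: in the Basic-Step setup (n = r+s, A₁ = fromBlocks(D,0,0,0) with D an r×r positive definite matrix, b₁ = 0), suppose (ỹ₂*,…,ỹ_m*) is an optimal solution of (D_pre): it is feasible, and every feasible (ỹ₂,…,ỹ_m) for (D_pre) satisfies Σ_{i=2}^m bᵢỹᵢ ≤ Σ_{i=2}^m bᵢỹᵢ*. If y₁ ∈ ℝ satisfies C − y₁A₁ − Σ_{i=2}^m ỹᵢ*Aᵢ ⪰ 0, then y = (y₁, ỹ₂*,…,ỹ_m*) is feasible for (D) and optimal for (D): every feasible y' for (D) satisfies Σ_{i=1}^m bᵢyᵢ' ≤ Σ_{i=1}^m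 bᵢyᵢ = Σ_{i=2}^m bᵢỹᵢ*. In particular, if such y₁ exists then val(D) = val(D_pre). -/
open Matrix

/-- Dual recovery correctness: if `yt` is optimal for the reduced dual (D_pre) and
`y₁` makes `C - y₁ A₁ - Σᵢ ytᵢ Aᵢ ⪰ 0`, then `y = (y₁, yt)` is feasible and optimal
for the original dual (D), with `val(D) = val(D_pre)`. -/
theorem sieve_dual_recovery (r s m : ℕ)
    (A : Fin (m + 1) → Matrix (Fin r ⊕ Fin s) (Fin r ⊕ Fin s) ℝ)
    (hA : ∀ i, (A i).IsSymm)
    (C : Matrix (Fin r ⊕ Fin s) (Fin r ⊕ Fin s) ℝ) (hC : C.IsSymm)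
    (D : Matrix (Fin r) (Fin r) ℝ) (hD : D.PosDef)
    (hA0 : A 0 = fromBlocks D 0 0 0)
    (b : Fin (m + 1) → ℝ) (hb0 : b 0 = 0)
    (yt : Fin m → ℝ)
    (hyt : ((C - ∑ i : Fin m, yt i • A i.succ).toBlocks₂₂).PosSemidef)
    (hopt : ∀ z : Fin m → ℝ, ((C - ∑ i : Fin m, z i • A i.succ).toBlocks₂₂).PosSemidef →
        ∑ i : Fin m, b i.succ * z i ≤ ∑ i : Fin m, b i.succ * yt i)
    (y₁ : ℝ)
    (hy₁ : (C - y₁ • A 0 - ∑ i : Fin m, yt i • A i.succ).PosSemidef) :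
    (C - ∑ i, (Fin.cons y₁ yt : Fin (m + 1) → ℝ) i • A i).PosSemidef ∧
    (∀ y' : Fin (m + 1) → ℝ, (C - ∑ i, y' i • A i).PosSemidef →
        ∑ i, b i * y' i ≤ ∑ i, b i * (Fin.cons y₁ yt : Fin (m + 1) → ℝ) i) ∧
    ∑ i, b i * (Fin.cons y₁ yt : Fin (m + 1) → ℝ) i = ∑ i : Fin m, b i.succ * yt i := by
  have hsum : ∀ (y : Fin (m + 1) → ℝ), (∑ i, y i • A i)
      = y 0 • A 0 + ∑ i : Fin m, y i.succ • A i.succ := by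
    intro y; rw [Fin.sum_univ_succ]
  have hval : ∑ i, b i * (Fin.cons y₁ yt : Fin (m + 1) → ℝ) i
      = ∑ i : Fin m, b i.succ * yt i := by
    rw [Fin.sum_univ_succ, hb0]; simp
  refine ⟨?_, ?_, hval⟩
  · rw [hsum]
    simpa [sub_sub, Fin.cons_zero, Fin.cons_succ] using hy₁
  · intro y' hy'
    have hfeas : ((C - ∑ i : Fin m, y' i.succ • A i.succ).toBlocks₂₂).PosSemidef := by
      have h22 : (C - ∑ i : Fin m, y' i.succ • A i.succ).toBlocks₂₂
          = (C - ∑ i, y' i • A i).toBlocks₂₂ := by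
        rw [hsum, hA0]
        ext i j
        simp [toBlocks₂₂, fromBlocks]
      rw [h22]
      exact hy'.submatrix Sum.inr
    calc ∑ i, b i * y' i = ∑ i : Fin m, b i.succ * y' i.succ := by
          rw [Fin.sum_univ_succ, hb0]; simp
      _ ≤ ∑ i : Fin m, b i.succ * yt i := hopt _ hfeas
      _ = ∑ i, b i * (Fin.cons y₁ yt : Fin (m + 1) → ℝ) i := hval.symm
end

section
/- Example-2 approximate ('fake') solutions: with the Example-2 data, for every real ε with 0 < ε < 1, the matrix X_ε with rows [ε, 0, (1−ε)/2], [0, ε, 0], [(1−ε)/2, 0, (1−ε)²/(4ε)] is positive semidefinite and satisfies A₂ • X_ε = 1, A₁ • X_ε = ε, and C • X_ε = 2ε. Thus X_ε violates only the first primal constraint A₁ • X = 0, by exactly ε, and its objective value 2ε tends to the dual optimal value 0 as ε → 0, even though the primal optimal value is 1. -/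
open Matrix

/-! `X_ε = ε (u uᵀ + e eᵀ)` with `u = (1, 0, (1 - ε) / (2ε))` and `e` the middle basis vector, so
`X_ε` is positive semidefinite: its corner entry `(1 - ε)² / (4ε)` makes the Schur complement of
the top-left entry vanish. This lets the off-diagonal entry `(1 - ε) / 2`, which `A₂ • X_ε = 1`
requires, coexist with a top-left entry `A₁ • X_ε` as small as `ε`. -/

theorem posSemidef_vecMulVec_self {n R : Type*} [Finite n] [CommRing R] [PartialOrder R]
    [StarRing R] [StarOrderedRing R] [TrivialStar R] (u : n → R) :
    (vecMulVec u u).PosSemidef := by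
  simpa using posSemidef_vecMulVec_self_star u

theorem posSemidef_fin3_of_sq_le_mul {a b c d : ℝ} (ha : 0 < a) (hd : 0 ≤ d)
    (hb : b ^ 2 ≤ a * c) : !![a, 0, b; 0, d, 0; b, 0, c].PosSemidef := by
  have hdecomp : !![a, 0, b; 0, d, 0; b, 0, c] =
      a • vecMulVec ![1, 0, b / a] ![1, 0, b / a] + d • vecMulVec ![0, 1, 0] ![0, 1, 0] +
        (c - b ^ 2 / a) • vecMulVec ![0, 0, 1] ![0, 0, 1] := by
    ext i j
    fin_cases i <;> fin_cases j <;> simp [field]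
  have hschur : 0 ≤ c - b ^ 2 / a := by
    rwa [sub_nonneg, div_le_iff₀' ha]
  rw [hdecomp]
  exact (((posSemidef_vecMulVec_self _).smul ha.le).add
    ((posSemidef_vecMulVec_self _).smul hd)).add ((posSemidef_vecMulVec_self _).smul hschur)

section TraceFin3

variable {R : Type*} [NonAssocSemiring R] (X : Matrix (Fin 3) (Fin 3) R)

theorem trace_single_zero_zero_mul : (!![1, 0, 0; 0, 0, 0; 0, 0, 0] * X).trace = X 0 0 := by
  simp [trace, vecMul, dotProduct, Fin.sum_univ_three]

theorem trace_diag_one_one_zero_mul :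
    (!![1, 0, 0; 0, 1, 0; 0, 0, 0] * X).trace = X 0 0 + X 1 1 := by
  simp [trace, vecMul, dotProduct, Fin.sum_univ_three]

theorem trace_antidiag_mul :
    (!![0, 0, 1; 0, 1, 0; 1, 0, 0] * X).trace = X 2 0 + X 1 1 + X 0 2 := by
  simp [trace, vecMul, dotProduct, Fin.sum_univ_three]

end TraceFin3

/-- Example-2 approximate ("fake") solutions: for `0 < ε < 1` the matrix `X_ε` is
PSD, satisfies `A₂ • X_ε = 1`, violates only the first constraint (`A₁ • X_ε = ε`),
has objective value `C • X_ε = 2ε`, and `2ε → 0` as `ε → 0⁺`. -/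
theorem example2_fake_solutions :
    (∀ ε : ℝ, 0 < ε → ε < 1 →
      (!![ε, 0, (1 - ε) / 2; 0, ε, 0; (1 - ε) / 2, 0, (1 - ε) ^ 2 / (4 * ε)] :
          Matrix (Fin 3) (Fin 3) ℝ).PosSemidef ∧
      ((!![0, 0, 1; 0, 1, 0; 1, 0, 0] : Matrix (Fin 3) (Fin 3) ℝ) *
        !![ε, 0, (1 - ε) / 2; 0, ε, 0; (1 - ε) / 2, 0, (1 - ε) ^ 2 / (4 * ε)]).trace = 1 ∧
      ((!![1, 0, 0; 0, 0, 0; 0, 0, 0] : Matrix (Fin 3) (Fin 3) ℝ) *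
        !![ε, 0, (1 - ε) / 2; 0, ε, 0; (1 - ε) / 2, 0, (1 - ε) ^ 2 / (4 * ε)]).trace = ε ∧
      ((!![1, 0, 0; 0, 1, 0; 0, 0, 0] : Matrix (Fin 3) (Fin 3) ℝ) *
        !![ε, 0, (1 - ε) / 2; 0, ε, 0; (1 - ε) / 2, 0, (1 - ε) ^ 2 / (4 * ε)]).trace = 2 * ε) ∧
    Filter.Tendsto (fun ε : ℝ => 2 * ε) (nhdsWithin 0 (Set.Ioi 0)) (nhds 0) := by
  refine ⟨fun ε hε _ => ⟨?_, ?_, ?_, ?_⟩, ?_⟩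
  · refine posSemidef_fin3_of_sq_le_mul hε hε.le (le_of_eq ?_)
    field_simp
    ring
  · rw [trace_antidiag_mul]
    simp only [of_apply, cons_val', cons_val_zero, cons_val_fin_one, cons_val, cons_val_one]
    ring
  · rw [trace_single_zero_zero_mul]
    rfl
  · rw [trace_diag_one_one_zero_mul]
    simp only [of_apply, cons_val', cons_val_zero, cons_val_one, empty_val', cons_val_fin_one]
    ring
  · exact tendsto_nhdsWithin_of_tendsto_nhds ((continuous_const_mul 2).tendsto' 0 0 (mul_zero 2))
end
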